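/- Let c ∈ R and let v be a C^2 bounded function on the closed half-plane satisfying Δv + c v_y ≤ 0 in R^2_+, with lim_{|y|→∞} v(x,y) = 0 uniformly for x in compact sets. Suppose there is a nonempty set H ⊂ R such that v(0,y) > 0 for y ∈ H, and for y ∉ H, -v_x(0,y) + d(y) v(0,y) ≥ 0 with d(y) ≥ 0, where d is continuous on R \ H. Then v > 0 in the closed half-plane. -/

import Mathlib

/-!
Write `L = Δ + c ∂_y`. A minimum of `v` at an interior point forces `L v ≥ 0`, so a strict
supersolution has no interior minimum; adding small barriers turns this into a weak minimum
principle. On the half-plane the barrier `ε (2 + x - x² / 2X)`, together with the decay in `y`,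
gives `v ≥ A := min (inf v(0, ·), 0)`. Hopf's lemma, proved with the Gaussian barrier
`exp (-α |q - z|²)`, yields the strong minimum principle and a positive inward derivative at a
boundary minimum. If `A < 0`, it is attained at a boundary point `y₀ ∉ H` where `v_x > 0`, while
the Robin condition with `d ≥ 0` forces `v_x(0, y₀) ≤ d v(0, y₀) ≤ 0`. Hence `v ≥ 0`; then
`v > 0` inside by the strong principle (since `v > 0` near `H`), and on the boundary by the same
Hopf–Robin argument.
-/

open Real Set Filter Topology

theorem IsLocalMin.deriv_deriv_nonneg {f : ℝ → ℝ} {a : ℝ} (h : IsLocalMin f a)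
    (hc : ContinuousAt f a) : 0 ≤ deriv (deriv f) a := by
  by_contra! hneg
  have hconst : f =ᶠ[𝓝 a] fun _ => f a :=
    (h.and (isLocalMax_of_deriv_deriv_neg hneg h.deriv_eq_zero hc)).mono
      fun _ hx => le_antisymm hx.2 hx.1
  have hderiv : deriv f =ᶠ[𝓝 a] fun _ => 0 :=
    hconst.eventually_nhds.mono fun _ hx =>
      (Filter.EventuallyEq.deriv_eq hx).trans (deriv_const _ _)
  simp [hderiv.deriv_eq] at hneg

theorem deriv_deriv_add {f g : ℝ → ℝ} (hf : ContDiff ℝ 2 f) (hg : ContDiff ℝ 2 g) (x : ℝ) :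
    deriv (deriv fun t => f t + g t) x = deriv (deriv f) x + deriv (deriv g) x := by
  have hfg : deriv (fun t => f t + g t) = fun t => deriv f t + deriv g t :=
    funext fun t =>
      deriv_fun_add (hf.differentiable two_ne_zero t) (hg.differentiable two_ne_zero t)
  rw [hfg]
  exact deriv_fun_add (hf.differentiable_deriv_two x) (hg.differentiable_deriv_two x)

theorem hasDerivAt_exp_neg_mul_sq (α a B x : ℝ) :
    HasDerivAt (fun t => exp (-α * ((t - a) ^ 2 + B)))
      (exp (-α * ((x - a) ^ 2 + B)) * (-2 * α * (x - a))) x := by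
  have hsq : HasDerivAt (fun t => -α * ((t - a) ^ 2 + B)) (-2 * α * (x - a)) x := by
    refine ((((hasDerivAt_id' x).sub_const a).fun_pow 2).add_const B).const_mul (-α)
      |>.congr_deriv ?_
    norm_num
    ring
  exact hsq.exp

theorem deriv_deriv_exp_neg_mul_sq (α a B x : ℝ) :
    deriv (deriv fun t => exp (-α * ((t - a) ^ 2 + B))) x
      = exp (-α * ((x - a) ^ 2 + B)) * (4 * α ^ 2 * (x - a) ^ 2 - 2 * α) := by
  have hderiv : deriv (fun t => exp (-α * ((t - a) ^ 2 + B)))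
      = fun t => exp (-α * ((t - a) ^ 2 + B)) * (-2 * α * (t - a)) :=
    funext fun t => (hasDerivAt_exp_neg_mul_sq α a B t).deriv
  have hlin : HasDerivAt (fun t : ℝ => -2 * α * (t - a)) (-2 * α) x := by
    simpa using ((hasDerivAt_id x).sub_const a).const_mul (-2 * α)
  rw [hderiv, ((hasDerivAt_exp_neg_mul_sq α a B x).fun_mul hlin).deriv]
  ring

theorem deriv_deriv_quadratic (a b k x : ℝ) :
    deriv (deriv fun x : ℝ => a + b * x + k * x ^ 2) x = 2 * k := by
  have h1 : ∀ t : ℝ, HasDerivAt (fun x : ℝ => a + b * x + k * x ^ 2) (b + 2 * k * t) t := fun t =>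
    ((((hasDerivAt_id' t).const_mul b).const_add a).fun_add
      ((hasDerivAt_pow 2 t).const_mul k)).congr_deriv (by norm_num; ring)
  have h2 : HasDerivAt (fun t : ℝ => b + 2 * k * t) (2 * k) x :=
    (((hasDerivAt_id' x).const_mul (2 * k)).const_add b).congr_deriv (mul_one _)
  rw [funext fun t => (h1 t).deriv, h2.deriv]

theorem HasDerivAt.nonneg_of_forall_Ioc_le {g : ℝ → ℝ} {g' b : ℝ} (hg : HasDerivAt g g' 0)
    (hb : 0 < b) (h : ∀ t ∈ Ioc 0 b, g 0 ≤ g t) : 0 ≤ g' := by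
  have hslope := (hasDerivWithinAt_iff_tendsto_slope' (s := Ioi 0) (lt_irrefl 0)).mp
    hg.hasDerivWithinAt
  refine ge_of_tendsto hslope ?_
  filter_upwards [Ioc_mem_nhdsGT hb] with t ht
  rw [slope_def_field]
  exact div_nonneg (sub_nonneg.mpr (h t ht)) (by linarith [ht.1])

/-- `Δf + c ∂f/∂y`, with the derivatives taken along the slices of `f` as in the hypothesis
on `v`. -/
noncomputable def driftLaplacian (c : ℝ) (f : ℝ × ℝ → ℝ) (p : ℝ × ℝ) : ℝ :=
  deriv (deriv fun x => f (x, p.2)) p.1 + deriv (deriv fun y => f (p.1, y)) p.2 +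
    c * deriv (fun y => f (p.1, y)) p.2

/-- The squared Euclidean distance; `dist` on `ℝ × ℝ` is the sup distance. -/
def sqDist (p q : ℝ × ℝ) : ℝ := (p.1 - q.1) ^ 2 + (p.2 - q.2) ^ 2

section sqDist

theorem continuous_sqDist (z : ℝ × ℝ) : Continuous fun q => sqDist q z := by
  unfold sqDist; fun_prop

theorem contDiff_sqDist (z : ℝ × ℝ) : ContDiff ℝ 2 fun q => sqDist q z := by
  unfold sqDist; fun_prop

theorem dist_sq_le_sqDist (p q : ℝ × ℝ) : dist p q ^ 2 ≤ sqDist p q := by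
  rw [Prod.dist_eq, Real.dist_eq, Real.dist_eq, sqDist]
  rcases max_choice |p.1 - q.1| |p.2 - q.2| with h | h <;> rw [h, sq_abs] <;>
    nlinarith [sq_nonneg (p.1 - q.1), sq_nonneg (p.2 - q.2)]

theorem sqDist_le_two_mul_dist_sq (p q : ℝ × ℝ) : sqDist p q ≤ 2 * dist p q ^ 2 := by
  rw [Prod.dist_eq, Real.dist_eq, Real.dist_eq, sqDist, ← sq_abs (p.1 - q.1), ← sq_abs (p.2 - q.2)]
  have h1 := le_max_left |p.1 - q.1| |p.2 - q.2|
  have h2 := le_max_right |p.1 - q.1| |p.2 - q.2|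
  nlinarith [abs_nonneg (p.1 - q.1), abs_nonneg (p.2 - q.2)]

theorem isCompact_sqDist_le (z : ℝ × ℝ) (r : ℝ) : IsCompact {q | sqDist q z ≤ r} :=
  (isCompact_closedBall z √r).of_isClosed_subset
    (isClosed_le (continuous_sqDist z) continuous_const)
    fun q hq => (le_abs_self _).trans (Real.abs_le_sqrt ((dist_sq_le_sqDist q z).trans hq))

theorem sqDist_add_smul_sub (w z : ℝ × ℝ) (t : ℝ) :
    sqDist (w + t • (z - w)) z = (1 - t) ^ 2 * sqDist w z := by
  simp only [sqDist, Prod.fst_add, Prod.snd_add, Prod.smul_fst, Prod.smul_snd, Prod.fst_sub,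
    Prod.snd_sub, smul_eq_mul]
  ring

end sqDist

section driftLaplacian

variable {c : ℝ} {f g : ℝ × ℝ → ℝ} {p : ℝ × ℝ}

theorem driftLaplacian_add (hf : ContDiff ℝ 2 f) (hg : ContDiff ℝ 2 g) :
    driftLaplacian c (fun q => f q + g q) p = driftLaplacian c f p + driftLaplacian c g p := by
  have hfx : ContDiff ℝ 2 fun x => f (x, p.2) := hf.comp (contDiff_prodMk_left p.2)
  have hgx : ContDiff ℝ 2 fun x => g (x, p.2) := hg.comp (contDiff_prodMk_left p.2)
  have hfy : ContDiff ℝ 2 fun y => f (p.1, y) := hf.comp (contDiff_prodMk_right p.1)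
  have hgy : ContDiff ℝ 2 fun y => g (p.1, y) := hg.comp (contDiff_prodMk_right p.1)
  simp only [driftLaplacian, deriv_deriv_add hfx hgx, deriv_deriv_add hfy hgy,
    deriv_fun_add (hfy.differentiable two_ne_zero p.2) (hgy.differentiable two_ne_zero p.2)]
  ring

theorem driftLaplacian_const_mul (k : ℝ) :
    driftLaplacian c (fun q => k * f q) p = k * driftLaplacian c f p := by
  simp only [driftLaplacian, deriv_const_mul_field']
  ring

theorem driftLaplacian_add_const (k : ℝ) :
    driftLaplacian c (fun q => f q + k) p = driftLaplacian c f p := by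
  simp only [driftLaplacian, deriv_add_const']

theorem driftLaplacian_comp_fst (g : ℝ → ℝ) :
    driftLaplacian c (fun q => g q.1) p = deriv (deriv g) p.1 := by
  simp [driftLaplacian]

theorem driftLaplacian_exp_neg_mul_sqDist (α : ℝ) (z : ℝ × ℝ) :
    driftLaplacian c (fun q => exp (-α * sqDist q z)) p = exp (-α * sqDist p z) *
      (4 * α ^ 2 * sqDist p z - 4 * α - 2 * α * c * (p.2 - z.2)) := by
  have hx : (fun x => exp (-α * sqDist (x, p.2) z))
      = fun x => exp (-α * ((x - z.1) ^ 2 + (p.2 - z.2) ^ 2)) := rfl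
  have hy : (fun y => exp (-α * sqDist (p.1, y) z))
      = fun y => exp (-α * ((y - z.2) ^ 2 + (p.1 - z.1) ^ 2)) := by
    funext y; rw [sqDist, add_comm]
  rw [driftLaplacian, hx, hy, (hasDerivAt_exp_neg_mul_sq α z.2 _ p.2).deriv,
    deriv_deriv_exp_neg_mul_sq, deriv_deriv_exp_neg_mul_sq, sqDist, add_comm ((p.2 - z.2) ^ 2)]
  ring

theorem driftLaplacian_exp_neg_mul_sqDist_pos {α r : ℝ} (hr : 0 < r)
    (hα : 4 + c ^ 2 + r ≤ α * r) {z : ℝ × ℝ} (hp : r / 4 < sqDist p z) :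
    0 < driftLaplacian c (fun q => exp (-α * sqDist q z)) p := by
  rw [driftLaplacian_exp_neg_mul_sqDist]
  refine mul_pos (exp_pos _) ?_
  have hα₀ : 0 < α := pos_of_mul_pos_left (lt_of_lt_of_le (by positivity) hα) hr.le
  have hy : (p.2 - z.2) ^ 2 ≤ sqDist p z := le_add_of_nonneg_left (sq_nonneg _)
  have key : 2 * c * (p.2 - z.2) + 4 < 4 * α * sqDist p z := by
    nlinarith [sq_nonneg (c - (p.2 - z.2))]
  nlinarith

theorem IsLocalMin.driftLaplacian_nonneg (h : IsLocalMin f p) (hc : ContinuousAt f p) :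
    0 ≤ driftLaplacian c f p := by
  have hx : ContinuousAt (fun x => (x, p.2)) p.1 := by fun_prop
  have hy : ContinuousAt (fun y => (p.1, y)) p.2 := by fun_prop
  have hminy : IsLocalMin (fun y => f (p.1, y)) p.2 := h.comp_continuous hy
  rw [driftLaplacian, hminy.deriv_eq_zero, mul_zero, add_zero]
  exact add_nonneg ((h.comp_continuous hx).deriv_deriv_nonneg (hc.comp hx))
    (hminy.deriv_deriv_nonneg (hc.comp hy))

end driftLaplacian

section minimumPrinciple

variable {c : ℝ} {f : ℝ × ℝ → ℝ}

theorem nonneg_of_driftLaplacian_neg {K S : Set (ℝ × ℝ)} (hK : IsCompact K) (hS : IsOpen S)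
    (hSK : S ⊆ K) (hf : Continuous f) (hL : ∀ p ∈ S, driftLaplacian c f p < 0)
    (hbd : ∀ p ∈ K \ S, 0 ≤ f p) {p : ℝ × ℝ} (hp : p ∈ K) : 0 ≤ f p := by
  obtain ⟨p₀, hp₀K, hmin⟩ := hK.exists_isMinOn ⟨p, hp⟩ hf.continuousOn
  by_cases hp₀S : p₀ ∈ S
  · have hloc : IsLocalMin f p₀ := hmin.isLocalMin (mem_of_superset (hS.mem_nhds hp₀S) hSK)
    exact absurd (hloc.driftLaplacian_nonneg hf.continuousAt) (hL p₀ hp₀S).not_ge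
  · exact (hbd p₀ ⟨hp₀K, hp₀S⟩).trans (hmin hp)

theorem nonneg_of_driftLaplacian_neg_rectangle {a₁ b₁ a₂ b₂ : ℝ} (hf : Continuous f)
    (hL : ∀ p ∈ Ioo a₁ b₁ ×ˢ Ioo a₂ b₂, driftLaplacian c f p < 0)
    (hbd : ∀ p ∈ Icc a₁ b₁ ×ˢ Icc a₂ b₂, p.1 = a₁ ∨ p.1 = b₁ ∨ p.2 = a₂ ∨ p.2 = b₂ → 0 ≤ f p)
    {p : ℝ × ℝ} (hp : p ∈ Icc a₁ b₁ ×ˢ Icc a₂ b₂) : 0 ≤ f p := by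
  refine nonneg_of_driftLaplacian_neg (isCompact_Icc.prod isCompact_Icc)
    (isOpen_Ioo.prod isOpen_Ioo) (prod_mono Ioo_subset_Icc_self Ioo_subset_Icc_self) hf hL
    (fun q ⟨hqK, hqS⟩ => hbd q hqK ?_) hp
  obtain ⟨⟨h₁, h₁'⟩, h₂, h₂'⟩ := hqK
  simp only [mem_prod, mem_Ioo, not_and_or, not_lt] at hqS
  rcases hqS with (h | h) | (h | h)
  exacts [Or.inl (le_antisymm h h₁), Or.inr (Or.inl (le_antisymm h₁' h)),
    Or.inr (Or.inr (Or.inl (le_antisymm h h₂))), Or.inr (Or.inr (Or.inr (le_antisymm h₂' h)))]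

theorem exists_barrier_le (hf : ContDiff ℝ 2 f) {z : ℝ × ℝ} {r α m : ℝ} (hr : 0 < r)
    (hα : 4 + c ^ 2 + r ≤ α * r) (hL : ∀ q, sqDist q z < r → driftLaplacian c f q ≤ 0)
    (hinner : ∀ q, sqDist q z = r / 4 → m < f q) (houter : ∀ q, sqDist q z = r → m ≤ f q) :
    ∃ k > 0, ∀ q, r / 4 ≤ sqDist q z → sqDist q z ≤ r →
      m + k * (exp (-α * sqDist q z) - exp (-α * r)) ≤ f q := by
  obtain ⟨a, hma, ha⟩ := ((isCompact_sqDist_le z (r / 4)).of_isClosed_subset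
      (isClosed_eq (continuous_sqDist z) continuous_const) fun _ hq => le_of_eq hq)
    |>.exists_forall_le' hf.continuous.continuousOn hinner
  set h : ℝ × ℝ → ℝ := fun q => exp (-α * sqDist q z)
  have hh : ContDiff ℝ 2 h := Real.contDiff_exp.comp (contDiff_const.mul (contDiff_sqDist z))
  -- `k * h = a - m` on the inner circle
  set k := (a - m) * exp (α * (r / 4))
  have hk : 0 < k := mul_pos (sub_pos.mpr hma) (exp_pos _)
  have hkh : k * exp (-α * (r / 4)) = a - m := by
    rw [mul_assoc, ← exp_add, neg_mul, add_neg_cancel, exp_zero, mul_one]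
  refine ⟨k, hk, fun q hq₁ hq₂ => ?_⟩
  have hφ := nonneg_of_driftLaplacian_neg (c := c)
    (f := fun q => f q + (-k) * h q + (k * exp (-α * r) - m))
    (K := {q | sqDist q z ≤ r} ∩ {q | r / 4 ≤ sqDist q z})
    (S := {q | sqDist q z < r} ∩ {q | r / 4 < sqDist q z})
    ((isCompact_sqDist_le z r).inter_right (isClosed_le continuous_const (continuous_sqDist z)))
    ((isOpen_lt (continuous_sqDist z) continuous_const).inter
      (isOpen_lt continuous_const (continuous_sqDist z)))
    (inter_subset_inter (ofPred_subset_ofPred.mpr fun _ => le_of_lt)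
      (ofPred_subset_ofPred.mpr fun _ => le_of_lt)) (by fun_prop) ?_ ?_ ⟨hq₂, hq₁⟩
  · simp only [h] at hφ
    linarith
  · rintro p ⟨hp₂ : sqDist p z < r, hp₁ : r / 4 < sqDist p z⟩
    rw [driftLaplacian_add_const, driftLaplacian_add hf (contDiff_const.mul hh),
      driftLaplacian_const_mul]
    nlinarith [hL p hp₂, driftLaplacian_exp_neg_mul_sqDist_pos (c := c) hr hα hp₁]
  · rintro p ⟨⟨hp₂ : sqDist p z ≤ r, hp₁ : r / 4 ≤ sqDist p z⟩, hpS⟩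
    rcases hp₁.eq_or_lt with hp₁ | hp₁
    · have : 0 < k * exp (-α * r) := by positivity
      simp only [h, ← hp₁]
      linarith [ha p hp₁.symm]
    · have hp₂ : sqDist p z = r := hp₂.eq_of_not_lt fun hp₂ => hpS ⟨hp₂, hp₁⟩
      simp only [h, hp₂]
      linarith [houter p hp₂]

theorem hopf_lemma (hf : ContDiff ℝ 2 f) {z w : ℝ × ℝ} {r : ℝ} (hr : 0 < r) (hw : sqDist w z = r)
    (hL : ∀ q, sqDist q z < r → driftLaplacian c f q ≤ 0)
    (hlt : ∀ q, sqDist q z < r → f w < f q) (hle : ∀ q, sqDist q z ≤ r → f w ≤ f q) :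
    0 < fderiv ℝ f w (z - w) := by
  set α := (4 + c ^ 2 + r) / r
  obtain ⟨k, hk, hbarrier⟩ := exists_barrier_le (α := α) hf hr (div_mul_cancel₀ _ hr.ne').ge hL
    (fun q hq => hlt q (by linarith)) fun q hq => hle q hq.le
  set u : ℝ → ℝ × ℝ := fun t => w + t • (z - w)
  have hu : HasDerivAt u (z - w) 0 := by
    simpa [u] using ((hasDerivAt_id (0 : ℝ)).smul_const (z - w)).const_add w
  have hfu : HasDerivAt (fun t => f (u t)) (fderiv ℝ f w (z - w)) 0 := by
    have hfd : HasFDerivAt f (fderiv ℝ f w) (u 0) := by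
      simpa [u] using (hf.differentiable two_ne_zero w).hasFDerivAt
    exact hfd.comp_hasDerivAt 0 hu
  have hbu : ∀ t, exp (-α * sqDist (u t) z) = exp (-(α * r) * ((t - 1) ^ 2 + 0)) := fun t => by
    simp only [u, sqDist_add_smul_sub, hw]; ring_nf
  -- along the inward ray, `f ∘ u` dominates `f w` plus the barrier, with equality at `t = 0`
  have hφ := hfu.add ((hasDerivAt_exp_neg_mul_sq (α * r) 1 0 0).const_mul (-k))
  have hderiv := hφ.nonneg_of_forall_Ioc_le (b := 1 / 2) (by norm_num) fun t ht => by
    have h₁ : 1 / 4 ≤ (1 - t) ^ 2 := by nlinarith [ht.2]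
    have h₂ : (1 - t) ^ 2 ≤ 1 := by nlinarith [ht.1, ht.2]
    have := hbarrier (u t) (by rw [sqDist_add_smul_sub, hw]; nlinarith)
      (by rw [sqDist_add_smul_sub, hw]; nlinarith)
    rw [hbu] at this
    simp only [u, add_zero]
    norm_num at this ⊢
    linarith
  have hbarrier_deriv : (-k) * (exp (-(α * r) * ((0 - 1) ^ 2 + 0)) * (-2 * (α * r) * (0 - 1)))
      = -(k * (exp (-(α * r)) * (2 * (α * r)))) := by ring_nf
  have : 0 < k * (exp (-(α * r)) * (2 * (α * r))) := by positivity
  linarith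

theorem eventually_eq_of_isMinOn (hf : ContDiff ℝ 2 f) {U : Set (ℝ × ℝ)} (hU : IsOpen U)
    (hL : ∀ p ∈ U, driftLaplacian c f p ≤ 0) {z : ℝ × ℝ} (hz : z ∈ U) (hmin : IsMinOn f U z) :
    ∀ᶠ q in 𝓝 z, f q = f z := by
  obtain ⟨ε, hε, hball⟩ := Metric.isOpen_iff.mp hU z hz
  filter_upwards [Metric.ball_mem_nhds z (by positivity : 0 < ε / 3)] with q hq
  by_contra hne
  -- `w` is a point of the level set `f = f z` closest to `q`; Hopf's lemma on the disc about `q`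
  -- through `w` contradicts `∇f(w) = 0`.
  obtain ⟨w, ⟨hwq, hwz⟩, hwmin⟩ := ((isCompact_sqDist_le q (sqDist z q)).inter_right
    (isClosed_eq hf.continuous continuous_const)).exists_isMinOn ⟨z, le_refl (sqDist z q), rfl⟩
    (continuous_sqDist q).continuousOn
  have hwq : sqDist w q ≤ sqDist z q := hwq
  have hwz : f w = f z := hwz
  have hminw : IsMinOn f U w := fun p hp => hwz ▸ hmin hp
  have hdisc : ∀ p, sqDist p q ≤ sqDist w q → p ∈ U := by
    intro p hp
    have hpq : dist p q ≤ 2 * dist q z := by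
      refine le_of_pow_le_pow_left₀ two_ne_zero (by positivity) ?_
      rw [dist_comm q z]
      nlinarith [dist_sq_le_sqDist p q, sqDist_le_two_mul_dist_sq z q]
    rw [Metric.mem_ball] at hq
    exact hball (Metric.mem_ball.mpr ((dist_triangle p q z).trans_lt (by linarith)))
  have hr : 0 < sqDist w q := by
    refine lt_of_le_of_ne (by unfold sqDist; positivity) fun h => hne ?_
    have : dist w q = 0 := pow_eq_zero_iff two_ne_zero |>.mp
      (le_antisymm (h ▸ dist_sq_le_sqDist w q) (sq_nonneg _))
    rw [← dist_eq_zero.mp this, hwz]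
  have hlt : ∀ p, sqDist p q < sqDist w q → f w < f p := by
    intro p hp
    refine (hminw (hdisc p hp.le)).lt_of_ne fun h => (hwmin ⟨hp.le.trans hwq, ?_⟩).not_gt hp
    exact (h.symm.trans hwz :)
  have hopf := hopf_lemma hf hr rfl (fun p hp => hL p (hdisc p hp.le)) hlt
    fun p hp => hminw (hdisc p hp)
  have hloc : IsLocalMin f w := hminw.isLocalMin (hU.mem_nhds (hdisc w le_rfl))
  simp [hloc.fderiv_eq_zero] at hopf

theorem lt_of_driftLaplacian_nonpos (hf : ContDiff ℝ 2 f) {U : Set (ℝ × ℝ)} (hU : IsOpen U)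
    (hU' : IsPreconnected U) (hL : ∀ p ∈ U, driftLaplacian c f p ≤ 0) {m : ℝ}
    (hm : ∀ p ∈ U, m ≤ f p) {p₀ : ℝ × ℝ} (hp₀ : p₀ ∈ U) (hlt : m < f p₀) {p : ℝ × ℝ}
    (hp : p ∈ U) : m < f p := by
  by_contra! hle
  have hlevel : IsOpen {q | q ∈ U ∧ f q = m} := by
    refine isOpen_iff_mem_nhds.mpr fun q ⟨hqU, hqm⟩ => ?_
    have hmin : IsMinOn f U q := fun q' hq' => hqm ▸ hm q' hq'
    filter_upwards [hU.mem_nhds hqU, eventually_eq_of_isMinOn hf hU hL hqU hmin] with q' hq' h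
    exact ⟨hq', h.trans hqm⟩
  obtain ⟨q, -, ⟨-, hq⟩, hq'⟩ := hU' _ _ hlevel (isOpen_lt continuous_const hf.continuous)
    (fun q hq => (hm q hq).eq_or_lt.imp (fun h => ⟨hq, h.symm⟩) id)
    ⟨p, hp, hp, le_antisymm hle (hm p hp)⟩ ⟨p₀, hp₀, hlt⟩
  exact (hq'.ne' : f q ≠ m) hq

end minimumPrinciple

section halfPlane

variable {c : ℝ} {f : ℝ × ℝ → ℝ}

theorem isPreconnected_halfPlane : IsPreconnected {p : ℝ × ℝ | 0 < p.1} := by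
  have := (isPreconnected_Ioi (a := (0 : ℝ))).prod (isPreconnected_univ (α := ℝ))
  rwa [prod_univ] at this

theorem lt_of_driftLaplacian_nonpos_halfPlane (hf : ContDiff ℝ 2 f)
    (hL : ∀ p : ℝ × ℝ, 0 < p.1 → driftLaplacian c f p ≤ 0) {m : ℝ}
    (hm : ∀ p : ℝ × ℝ, 0 < p.1 → m ≤ f p) {p₀ : ℝ × ℝ} (hp₀ : 0 < p₀.1) (hlt : m < f p₀)
    {p : ℝ × ℝ} (hp : 0 < p.1) : m < f p :=
  lt_of_driftLaplacian_nonpos hf (isOpen_lt continuous_const continuous_fst)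
    isPreconnected_halfPlane hL hm hp₀ hlt hp

theorem le_two_mul_add_mul_add_neg_div_mul_sq {η X x : ℝ} (hη : 0 ≤ η) (hX : 0 < X)
    (hx : x ∈ Icc 0 X) : η ≤ 2 * η + η * x + -(η / (2 * X)) * x ^ 2 := by
  have h : x ^ 2 / (2 * X) ≤ x / 2 := by
    rw [div_le_div_iff₀ (by positivity) two_pos]; nlinarith [hx.1, hx.2]
  have : η / (2 * X) * x ^ 2 ≤ η * (x / 2) := by
    rw [div_mul_eq_mul_div, mul_div_assoc]; exact mul_le_mul_of_nonneg_left h hη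
  nlinarith [mul_nonneg hη hx.1]

theorem sub_mul_le_of_driftLaplacian_nonpos_halfPlane (hf : ContDiff ℝ 2 f)
    (hL : ∀ p : ℝ × ℝ, 0 < p.1 → driftLaplacian c f p ≤ 0) {M A : ℝ}
    (hM : ∀ p : ℝ × ℝ, 0 ≤ p.1 → -M ≤ f p)
    (hlat : ∀ R > 0, ∀ ε > 0, ∃ Y, ∀ p : ℝ × ℝ, p.1 ∈ Icc 0 R → Y ≤ |p.2| → A - ε ≤ f p)
    (hbd : ∀ y, A ≤ f (0, y)) {η : ℝ} (hη : 0 < η) {p : ℝ × ℝ} (hp : 0 ≤ p.1) :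
    A - η * (2 + p.1) ≤ f p := by
  set X := p.1 + 1 + 2 * |M + A| / η
  have hX : 0 < X := by positivity
  have hpX : p.1 ≤ X := by
    have : 0 ≤ 2 * |M + A| / η := by positivity
    linarith
  have hηX : M + A ≤ η * X / 2 := by
    have : η * (2 * |M + A| / η) = 2 * |M + A| := by field_simp
    nlinarith [le_abs_self (M + A)]
  obtain ⟨Y, hY⟩ := hlat X hX η hη
  -- `g'' < 0`, `g ≥ η` on `[0, X]`, and `g X` dominates `M + A`
  set g : ℝ → ℝ := fun x => 2 * η + η * x + (-(η / (2 * X))) * x ^ 2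
  have hg : ∀ x ∈ Icc 0 X, η ≤ g x := fun x hx =>
    le_two_mul_add_mul_add_neg_div_mul_sq hη.le hX hx
  have hgX : g X = 2 * η + η * X / 2 := by simp only [g]; field_simp; ring
  have hgc : ContDiff ℝ 2 g := by fun_prop
  have hW := nonneg_of_driftLaplacian_neg_rectangle (c := c) (f := fun q => f q + g q.1 + -A)
    (a₁ := 0) (b₁ := X) (a₂ := -max Y |p.2|) (b₂ := max Y |p.2|)
    (by have := hf.continuous; have := hgc.continuous; fun_prop) ?_ ?_ (p := p)
    ⟨⟨hp, hpX⟩, (neg_le_neg (le_max_right _ _)).trans (neg_abs_le _),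
      (le_abs_self _).trans (le_max_right _ _)⟩
  · have : 0 ≤ η / (2 * X) * p.1 ^ 2 := by positivity
    simp only [g] at hW
    linarith
  · intro q hq
    rw [driftLaplacian_add_const,
      driftLaplacian_add (g := fun q => g q.1) hf (hgc.comp contDiff_fst),
      driftLaplacian_comp_fst, deriv_deriv_quadratic]
    have : 2 * -(η / (2 * X)) = -(η / X) := by field_simp
    have : 0 < η / X := by positivity
    linarith [hL q hq.1.1]
  · rintro q ⟨hq₁, hq₂⟩ hq
    have hgq := hg q.1 hq₁
    rcases hq with hq | hq | hq | hq
    · have : A ≤ f q := by rw [(Prod.ext hq rfl : q = (0, q.2))]; exact hbd q.2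
      linarith
    · rw [hq] at hgq ⊢
      linarith [hM q hq₁.1]
    · have := hY q hq₁ ((le_max_left _ _).trans (by rw [hq, abs_neg]; exact le_abs_self _))
      linarith
    · have := hY q hq₁ ((le_max_left _ _).trans (by rw [hq]; exact le_abs_self _))
      linarith

theorem le_of_driftLaplacian_nonpos_halfPlane (hf : ContDiff ℝ 2 f)
    (hL : ∀ p : ℝ × ℝ, 0 < p.1 → driftLaplacian c f p ≤ 0) {M A : ℝ}
    (hM : ∀ p : ℝ × ℝ, 0 ≤ p.1 → -M ≤ f p)
    (hlat : ∀ R > 0, ∀ ε > 0, ∃ Y, ∀ p : ℝ × ℝ, p.1 ∈ Icc 0 R → Y ≤ |p.2| → A - ε ≤ f p)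
    (hbd : ∀ y, A ≤ f (0, y)) {p : ℝ × ℝ} (hp : 0 ≤ p.1) : A ≤ f p := by
  refine le_of_forall_pos_le_add fun ε hε => ?_
  have := sub_mul_le_of_driftLaplacian_nonpos_halfPlane hf hL hM hlat hbd
    (η := ε / (2 + p.1)) (by positivity) hp
  rwa [div_mul_cancel₀ _ (by positivity), sub_le_iff_le_add] at this

theorem deriv_pos_of_isMinOn_halfPlane (hf : ContDiff ℝ 2 f)
    (hL : ∀ p : ℝ × ℝ, 0 < p.1 → driftLaplacian c f p ≤ 0) {y : ℝ}
    (hle : ∀ p : ℝ × ℝ, 0 ≤ p.1 → f (0, y) ≤ f p) (hlt : ∀ p : ℝ × ℝ, 0 < p.1 → f (0, y) < f p) :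
    0 < deriv (fun x => f (x, y)) 0 := by
  have hdisc : ∀ q : ℝ × ℝ, sqDist q (1, y) ≤ 1 → 0 ≤ q.1 := fun q hq => by
    unfold sqDist at hq; nlinarith [sq_nonneg (q.2 - y)]
  have hdisc' : ∀ q : ℝ × ℝ, sqDist q (1, y) < 1 → 0 < q.1 := fun q hq => by
    unfold sqDist at hq; nlinarith [sq_nonneg (q.2 - y)]
  have hopf := hopf_lemma (c := c) hf one_pos (by norm_num [sqDist])
    (fun q hq => hL q (hdisc' q hq)) (fun q hq => hlt q (hdisc' q hq))
    fun q hq => hle q (hdisc q hq)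
  have hslice : HasDerivAt (fun x => f (x, y)) (fderiv ℝ f (0, y) (1, 0)) 0 :=
    (hf.differentiable two_ne_zero _).hasFDerivAt.comp_hasDerivAt (0 : ℝ)
      ((hasDerivAt_id 0).prodMk (hasDerivAt_const 0 y))
  rw [hslice.deriv]
  simpa using hopf

theorem robin_neg_of_boundary_min (hf : ContDiff ℝ 2 f)
    (hL : ∀ p : ℝ × ℝ, 0 < p.1 → driftLaplacian c f p ≤ 0) {y d : ℝ} (hy : f (0, y) ≤ 0)
    (hd : 0 ≤ d) (hle : ∀ p : ℝ × ℝ, 0 ≤ p.1 → f (0, y) ≤ f p) {p₀ : ℝ × ℝ} (hp₀ : 0 < p₀.1)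
    (hlt : f (0, y) < f p₀) : -deriv (fun x => f (x, y)) 0 + d * f (0, y) < 0 := by
  have := deriv_pos_of_isMinOn_halfPlane hf hL hle fun p hp =>
    lt_of_driftLaplacian_nonpos_halfPlane hf hL (fun q hq => hle q hq.le) hp₀ hlt hp
  nlinarith [mul_nonpos_of_nonneg_of_nonpos hd hy]

theorem nonneg_of_robin (hf : ContDiff ℝ 2 f)
    (hL : ∀ p : ℝ × ℝ, 0 < p.1 → driftLaplacian c f p ≤ 0)
    (hrobin : ∀ y, f (0, y) ≤ 0 → ∃ d ≥ 0, 0 ≤ -deriv (fun x => f (x, y)) 0 + d * f (0, y))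
    {M : ℝ} (hM : ∀ p : ℝ × ℝ, 0 ≤ p.1 → -M ≤ f p)
    (hdecay : ∀ R > 0, ∀ ε > 0, ∃ Y, ∀ p : ℝ × ℝ, p.1 ∈ Icc 0 R → Y ≤ |p.2| → -ε ≤ f p) :
    ∀ p : ℝ × ℝ, 0 ≤ p.1 → 0 ≤ f p := by
  have hPL : ∀ A ≤ 0, (∀ y, A ≤ f (0, y)) → ∀ p : ℝ × ℝ, 0 ≤ p.1 → A ≤ f p :=
    fun A hA hbd p hp => le_of_driftLaplacian_nonpos_halfPlane hf hL hM
      (fun R hR ε hε => let ⟨Y, hY⟩ := hdecay R hR ε hε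
        ⟨Y, fun q hq hy => by linarith [hY q hq hy]⟩) hbd hp
  by_cases hneg : ∃ y, f (0, y) < 0
  · exfalso
    obtain ⟨y₁, hy₁⟩ := hneg
    obtain ⟨Y, hY⟩ := hdecay 1 one_pos _ (neg_pos.mpr hy₁)
    obtain ⟨y₀, hy₀⟩ := (hf.comp (contDiff_prodMk_right 0)).continuous.exists_forall_le' y₁
      ((tendsto_norm_cocompact_atTop.eventually_ge_atTop Y).mono fun y hy => by
        simpa using hY (0, y) ⟨le_rfl, zero_le_one⟩ hy)
    have hA : f (0, y₀) < 0 := (hy₀ y₁).trans_lt hy₁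
    obtain ⟨Y', hY'⟩ := hdecay 1 one_pos _ (by linarith : 0 < -f (0, y₀) / 2)
    obtain ⟨d, hd, hrob⟩ := hrobin y₀ hA.le
    refine hrob.not_gt (robin_neg_of_boundary_min hf hL hA.le hd (hPL _ hA.le hy₀)
      (p₀ := (1, |Y'|)) one_pos ?_)
    linarith [hY' (1, |Y'|) ⟨zero_le_one, le_rfl⟩ ((le_abs_self _).trans (abs_abs _).ge)]
  · push Not at hneg
    exact hPL 0 le_rfl hneg

theorem pos_of_robin (hf : ContDiff ℝ 2 f)
    (hL : ∀ p : ℝ × ℝ, 0 < p.1 → driftLaplacian c f p ≤ 0)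
    (hrobin : ∀ y, f (0, y) ≤ 0 → ∃ d ≥ 0, 0 ≤ -deriv (fun x => f (x, y)) 0 + d * f (0, y))
    (hnonneg : ∀ p : ℝ × ℝ, 0 ≤ p.1 → 0 ≤ f p) {y₀ : ℝ} (hy₀ : 0 < f (0, y₀))
    {p : ℝ × ℝ} (hp : 0 ≤ p.1) : 0 < f p := by
  obtain ⟨t, htpos, ht⟩ : ∃ t, 0 < f (t, y₀) ∧ t ∈ Ioi 0 :=
    ((((hf.comp (contDiff_prodMk_left y₀)).continuous.tendsto 0).eventually
      (lt_mem_nhds hy₀)).filter_mono (nhdsWithin_le_nhds (s := Ioi 0))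
      |>.and self_mem_nhdsWithin).exists
  rcases hp.eq_or_lt with hp | hp
  · rw [(Prod.ext hp.symm rfl : p = (0, p.2))]
    refine (hnonneg _ le_rfl).lt_of_ne' fun h => ?_
    obtain ⟨d, hd, hrob⟩ := hrobin p.2 h.le
    exact hrob.not_gt (robin_neg_of_boundary_min hf hL h.le hd
      (fun q hq => h.trans_le (hnonneg q hq)) (p₀ := (t, y₀)) ht (h.trans_lt htpos))
  · exact lt_of_driftLaplacian_nonpos_halfPlane hf hL (fun q hq => hnonneg q hq.le)
      (p₀ := (t, y₀)) ht htpos hp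

end halfPlane

theorem maximum_principle_robin_general (c : ℝ) (v : ℝ → ℝ → ℝ)
    (hv : ContDiff ℝ 2 (fun p : ℝ × ℝ => v p.1 p.2))
    (hbdd : ∃ M : ℝ, ∀ x ≥ (0 : ℝ), ∀ y : ℝ, |v x y| ≤ M)
    (hsub : ∀ x > (0 : ℝ), ∀ y : ℝ,
      deriv (fun x' => deriv (fun x'' => v x'' y) x') x + deriv (deriv (v x)) y +
        c * deriv (v x) y ≤ 0)
    (hlim : ∀ R > (0 : ℝ), ∀ ε > (0 : ℝ), ∃ M : ℝ,
      ∀ x ∈ Icc (0 : ℝ) R, ∀ y : ℝ, M ≤ |y| → |v x y| ≤ ε)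
    (H : Set ℝ) (hHne : H.Nonempty) (hHpos : ∀ y ∈ H, 0 < v 0 y)
    (d : ℝ → ℝ)
    (hdpos : ∀ y ∉ H, 0 ≤ d y)
    (hrobin : ∀ y ∉ H, 0 ≤ -deriv (fun x => v x y) 0 + d y * v 0 y) :
    ∀ x ≥ (0 : ℝ), ∀ y : ℝ, 0 < v x y := by
  set f : ℝ × ℝ → ℝ := fun p => v p.1 p.2
  have hL : ∀ p : ℝ × ℝ, 0 < p.1 → driftLaplacian c f p ≤ 0 := fun p hp => hsub p.1 hp p.2
  have hrob : ∀ y, f (0, y) ≤ 0 → ∃ d ≥ 0, 0 ≤ -deriv (fun x => f (x, y)) 0 + d * f (0, y) :=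
    fun y hy =>
      have hyH : y ∉ H := fun hH => (hHpos y hH).not_ge hy
      ⟨d y, hdpos y hyH, hrobin y hyH⟩
  obtain ⟨M, hM⟩ := hbdd
  have hnonneg := nonneg_of_robin hv hL hrob (fun p hp => (abs_le.mp (hM p.1 hp p.2)).1)
    fun R hR ε hε => let ⟨Y, hY⟩ := hlim R hR ε hε
      ⟨Y, fun p hp hy => (abs_le.mp (hY p.1 hp p.2 hy)).1⟩
  obtain ⟨y₀, hy₀⟩ := hHne
  exact fun x hx y => pos_of_robin hv hL hrob hnonneg (hHpos y₀ hy₀) (p := (x, y)) hx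

/-- Maximum principle with Robin boundary condition: if `Δv + c v_y ≤ 0` in `ℝ²₊`,
`v` is bounded and tends to `0` as `|y| → ∞` uniformly on `x`-compact sets,
`v(0,·) > 0` on a nonempty set `H`, and `-v_x + d v ≥ 0` with `d ≥ 0` on the
boundary outside `H`, then `v > 0` on the closed half-plane. -/
theorem maximum_principle_robin (c : ℝ) (v : ℝ → ℝ → ℝ)
    (hv : ContDiff ℝ 2 (fun p : ℝ × ℝ => v p.1 p.2))
    (hbdd : ∃ M : ℝ, ∀ x ≥ (0 : ℝ), ∀ y : ℝ, |v x y| ≤ M)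
    (hsub : ∀ x > (0 : ℝ), ∀ y : ℝ,
      deriv (fun x' => deriv (fun x'' => v x'' y) x') x + deriv (deriv (v x)) y +
        c * deriv (v x) y ≤ 0)
    (hlim : ∀ R > (0 : ℝ), ∀ ε > (0 : ℝ), ∃ M : ℝ,
      ∀ x ∈ Icc (0 : ℝ) R, ∀ y : ℝ, M ≤ |y| → |v x y| ≤ ε)
    (H : Set ℝ) (hHne : H.Nonempty) (hHpos : ∀ y ∈ H, 0 < v 0 y)
    (d : ℝ → ℝ) (hd : ContinuousOn d Hᶜ)
    (hdpos : ∀ y ∉ H, 0 ≤ d y)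
    (hrobin : ∀ y ∉ H, 0 ≤ -deriv (fun x => v x y) 0 + d y * v 0 y) :
    ∀ x ≥ (0 : ℝ), ∀ y : ℝ, 0 < v x y :=
  maximum_principle_robin_general c v hv hbdd hsub hlim H hHne hHpos d hdpos hrobin
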